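/- arXiv:2605.29032 — 2 statements merged into one kernel-verified Lean document; each statement's English description precedes it below -/
import Mathlib

section
/- Simulation lemma: Let P and P̂ be two transition kernels on the same finite MDP (same reward r with 0 ≤ r ≤ R_max, discount γ ∈ (0,1), and initial distribution ρ₀). Then for every stationary policy π, |V_π(P) − V_π(P̂)| ≤ (γ·R_max/(1−γ)) · Σ_{(s,a)} d_π(s,a) · (1/2)·‖P(·|s,a) − P̂(·|s,a)‖₁, where d_π is the unnormalized discounted occupancy of π under the true kernel P. -/
open Finset Real

/-- `p` is a probability mass function on a finite type. -/
def IsPMF {X : Type*} [Fintype X] (p : X → ℝ) : Prop :=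
  (∀ x, 0 ≤ p x) ∧ ∑ x, p x = 1

/-- `P` is a transition kernel: each `P s a` is a pmf on states. -/
def IsKernel {S A : Type*} [Fintype S] [Fintype A] (P : S → A → S → ℝ) : Prop :=
  ∀ s a, IsPMF (P s a)

/-- `pol` is a stationary policy: each `pol s` is a pmf on actions. -/
def IsPolicy {S A : Type*} [Fintype S] [Fintype A] (pol : S → A → ℝ) : Prop :=
  ∀ s, IsPMF (pol s)

/-- `V` satisfies the Bellman evaluation equation for policy `pol` under kernel `P`,
reward `r` and discount `γ`. -/
def IsValue {S A : Type*} [Fintype S] [Fintype A] (P : S → A → S → ℝ) (pol : S → A → ℝ)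
    (r : S → A → ℝ) (γ : ℝ) (V : S → ℝ) : Prop :=
  ∀ s, V s = ∑ a, pol s a * (r s a + γ * ∑ s', P s a s' * V s')

/-- `d` is the (unnormalized) discounted state-action occupancy of `pol` under kernel `P`
with initial distribution `ρ₀` and discount `γ`. -/
def IsOcc {S A : Type*} [Fintype S] [Fintype A] (P : S → A → S → ℝ) (pol : S → A → ℝ)
    (ρ₀ : S → ℝ) (γ : ℝ) (d : S → A → ℝ) : Prop :=
  ∀ s a, d s a = pol s a * (ρ₀ s + γ * ∑ x : S × A, d x.1 x.2 * P x.1 x.2 s)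

/-- ℓ₁ distance between two pmfs on a finite type. -/
noncomputable def l1Dist {X : Type*} [Fintype X] (p q : X → ℝ) : ℝ :=
  ∑ x, |p x - q x|

/-- Total variation distance between two pmfs on a finite type. -/
noncomputable def tvDist {X : Type*} [Fintype X] (p q : X → ℝ) : ℝ :=
  (1 / 2) * ∑ x, |p x - q x|

/-- Kullback-Leibler divergence between two pmfs on a finite type (finite under
absolute continuity). -/
noncomputable def klF {X : Type*} [Fintype X] (p q : X → ℝ) : ℝ :=
  ∑ x, p x * Real.log (p x / q x)

/-- `d_data` satisfies κ-coverage for the policy set `Pol` under kernel `P`: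
every occupancy of a policy in `Pol` is dominated by `κ · d_data`. -/
def KappaCoverage {S A : Type*} [Fintype S] [Fintype A] (P : S → A → S → ℝ) (ρ₀ : S → ℝ)
    (γ : ℝ) (Pol : Set (S → A → ℝ)) (ddata : S → A → ℝ) (κ : ℝ) : Prop :=
  ∀ pol ∈ Pol, ∀ dpol : S → A → ℝ, IsOcc P pol ρ₀ γ dpol → ∀ s a, dpol s a ≤ κ * ddata s a

/-- Critic discrepancy `Δ_{D,P̂}(s,a)`. -/
noncomputable def critDelta {S A : Type*} [Fintype S] (P Phat : S → A → S → ℝ)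
    (D : S → A → S → ℝ) (s : S) (a : A) : ℝ :=
  (∑ s', P s a s' * D s a s') - ∑ s', Phat s a s' * D s a s'

/-- Supremum over the critic class of the critic discrepancy at `(s,a)`. -/
noncomputable def critSup {S A : Type*} [Fintype S] (𝒟 : Set (S → A → S → ℝ))
    (P Phat : S → A → S → ℝ) (s : S) (a : A) : ℝ :=
  sSup {y | ∃ D ∈ 𝒟, y = critDelta P Phat D s a}

section Aux
variable {S A : Type*} [Fintype S] [Fintype A]

/-- Values are bounded between 0 and Rmax/(1-γ). -/
lemma value_bounds [Nonempty S] [Nonempty A]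
    (P : S → A → S → ℝ) (hP : IsKernel P) (pol : S → A → ℝ) (hpol : IsPolicy pol)
    (r : S → A → ℝ) (Rmax : ℝ) (hr : ∀ s a, 0 ≤ r s a ∧ r s a ≤ Rmax)
    (γ : ℝ) (hγ0 : 0 < γ) (hγ1 : γ < 1) (V : S → ℝ) (hV : IsValue P pol r γ V) :
    ∀ s, 0 ≤ V s ∧ V s ≤ Rmax / (1 - γ) := by
  have h1γ : (0:ℝ) < 1 - γ := by linarith
  obtain ⟨s0, hs0⟩ := Finite.exists_max V
  obtain ⟨s1, hs1⟩ := Finite.exists_min V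
  have hub : V s0 ≤ Rmax + γ * V s0 := by
    calc V s0 = ∑ a, pol s0 a * (r s0 a + γ * ∑ s', P s0 a s' * V s') := hV s0
    _ ≤ ∑ a, pol s0 a * (Rmax + γ * V s0) := by
        apply Finset.sum_le_sum
        intro a _
        apply mul_le_mul_of_nonneg_left _ ((hpol s0).1 a)
        have h2 : ∑ s', P s0 a s' * V s' ≤ V s0 := by
          calc ∑ s', P s0 a s' * V s' ≤ ∑ s', P s0 a s' * V s0 :=
            Finset.sum_le_sum fun s' _ =>
              mul_le_mul_of_nonneg_left (hs0 s') ((hP s0 a).1 s')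
          _ = V s0 := by rw [← Finset.sum_mul, (hP s0 a).2, one_mul]
        have := (hr s0 a).2
        nlinarith
    _ = Rmax + γ * V s0 := by rw [← Finset.sum_mul, (hpol s0).2, one_mul]
  have hlb : γ * V s1 ≤ V s1 := by
    calc γ * V s1 = ∑ a, pol s1 a * (γ * V s1) := by
          rw [← Finset.sum_mul, (hpol s1).2, one_mul]
    _ ≤ ∑ a, pol s1 a * (r s1 a + γ * ∑ s', P s1 a s' * V s') := by
        apply Finset.sum_le_sum
        intro a _
        apply mul_le_mul_of_nonneg_left _ ((hpol s1).1 a)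
        have h2 : V s1 ≤ ∑ s', P s1 a s' * V s' := by
          calc V s1 = ∑ s', P s1 a s' * V s1 := by
                rw [← Finset.sum_mul, (hP s1 a).2, one_mul]
          _ ≤ ∑ s', P s1 a s' * V s' :=
            Finset.sum_le_sum fun s' _ =>
              mul_le_mul_of_nonneg_left (hs1 s') ((hP s1 a).1 s')
        have := (hr s1 a).1
        nlinarith
    _ = V s1 := (hV s1).symm
  have hV1 : 0 ≤ V s1 := by nlinarith
  have hV0 : V s0 ≤ Rmax / (1 - γ) := by
    rw [le_div_iff₀ h1γ]; nlinarith
  exact fun s => ⟨le_trans hV1 (hs1 s), le_trans (hs0 s) hV0⟩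

/-- The occupancy is nonnegative. -/
lemma occ_nonneg (P : S → A → S → ℝ) (hP : IsKernel P) (pol : S → A → ℝ)
    (hpol : IsPolicy pol) (ρ₀ : S → ℝ) (hρ : IsPMF ρ₀)
    (γ : ℝ) (hγ0 : 0 < γ) (hγ1 : γ < 1) (d : S → A → ℝ)
    (hd : IsOcc P pol ρ₀ γ d) : ∀ s a, 0 ≤ d s a := by
  set ν : S × A → ℝ := fun x => max (-(d x.1 x.2)) 0 with hν
  have hνnn : ∀ x, 0 ≤ ν x := fun x => le_max_right _ _
  have step1 : ∀ s a, ν (s, a) ≤ pol s a * (γ * ∑ x : S × A, ν x * P x.1 x.2 s) := by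
    intro s a
    have hpnn := (hpol s).1 a
    calc ν (s, a) = max (-(pol s a * (ρ₀ s + γ * ∑ x : S × A, d x.1 x.2 * P x.1 x.2 s))) 0 := by
          simp only [hν]; rw [hd s a]
    _ = pol s a * max (-(ρ₀ s + γ * ∑ x : S × A, d x.1 x.2 * P x.1 x.2 s)) 0 := by
          rw [mul_max_of_nonneg _ _ hpnn, mul_zero, mul_neg]
    _ ≤ pol s a * (γ * ∑ x : S × A, ν x * P x.1 x.2 s) := by
          apply mul_le_mul_of_nonneg_left _ hpnn
          have h3 : max (-(ρ₀ s + γ * ∑ x : S × A, d x.1 x.2 * P x.1 x.2 s)) 0 ≤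
              max (-(γ * ∑ x : S × A, d x.1 x.2 * P x.1 x.2 s)) 0 := by
            apply max_le _ (le_max_right _ _)
            have := hρ.1 s
            have : -(ρ₀ s + γ * ∑ x : S × A, d x.1 x.2 * P x.1 x.2 s) ≤
                -(γ * ∑ x : S × A, d x.1 x.2 * P x.1 x.2 s) := by linarith
            exact le_trans this (le_max_left _ _)
          refine le_trans h3 ?_
          have heq : max (-(γ * ∑ x : S × A, d x.1 x.2 * P x.1 x.2 s)) 0
              = γ * max (-(∑ x : S × A, d x.1 x.2 * P x.1 x.2 s)) 0 := by
            rw [mul_max_of_nonneg _ _ (le_of_lt hγ0), mul_zero, mul_neg]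
          rw [heq]
          apply mul_le_mul_of_nonneg_left _ (le_of_lt hγ0)
          apply max_le _ (Finset.sum_nonneg fun x _ => mul_nonneg (hνnn x) ((hP x.1 x.2).1 s))
          rw [← Finset.sum_neg_distrib]
          apply Finset.sum_le_sum
          intro x _
          have hPnn := (hP x.1 x.2).1 s
          calc -(d x.1 x.2 * P x.1 x.2 s) = (-(d x.1 x.2)) * P x.1 x.2 s := by ring
          _ ≤ ν x * P x.1 x.2 s := mul_le_mul_of_nonneg_right (le_max_left _ _) hPnn
  have key : ∑ x : S × A, ν x ≤ γ * ∑ x : S × A, ν x := by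
    calc ∑ x : S × A, ν x
        ≤ ∑ x : S × A, pol x.1 x.2 * (γ * ∑ y : S × A, ν y * P y.1 y.2 x.1) := by
          apply Finset.sum_le_sum
          intro x _
          exact step1 x.1 x.2
    _ = γ * ∑ x : S × A, ν x := by
          rw [Fintype.sum_prod_type]
          have : ∀ s : S, ∑ a : A, pol s a * (γ * ∑ y : S × A, ν y * P y.1 y.2 s)
              = γ * ∑ y : S × A, ν y * P y.1 y.2 s := by
            intro s
            rw [← Finset.sum_mul, (hpol s).2, one_mul]
          simp only [this]
          rw [← Finset.mul_sum]
          congr 1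
          rw [Finset.sum_comm]
          apply Finset.sum_congr rfl
          intro y _
          rw [← Finset.mul_sum, (hP y.1 y.2).2, mul_one]
  have hsum : ∑ x : S × A, ν x ≤ 0 := by nlinarith [Finset.sum_nonneg (fun x (_ : x ∈ Finset.univ) => hνnn x)]
  have hzero : ∀ x : S × A, ν x = 0 := by
    intro x
    have h1 : ∑ x : S × A, ν x = 0 :=
      le_antisymm hsum (Finset.sum_nonneg fun x _ => hνnn x)
    have := (Finset.sum_eq_zero_iff_of_nonneg (fun x _ => hνnn x)).mp h1
    exact this x (Finset.mem_univ x)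
  intro s a
  have := hzero (s, a)
  simp only [hν] at this
  have h2 : -(d s a) ≤ 0 := by
    calc -(d s a) ≤ max (-(d s a)) 0 := le_max_left _ _
    _ = 0 := this
  linarith

end Aux

section Aux2
variable {S A : Type*} [Fintype S] [Fintype A]

/-- Change of measure: performance difference via occupancy. -/
lemma occ_measure (P : S → A → S → ℝ) (hP : IsKernel P) (pol : S → A → ℝ)
    (hpol : IsPolicy pol) (ρ₀ : S → ℝ) (γ : ℝ) (d : S → A → ℝ)
    (hd : IsOcc P pol ρ₀ γ d) (c : S → A → ℝ) (Δ : S → ℝ)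
    (hΔ : ∀ s, Δ s = ∑ a, pol s a * (c s a + γ * ∑ s', P s a s' * Δ s')) :
    ∑ s, ρ₀ s * Δ s = ∑ x : S × A, d x.1 x.2 * c x.1 x.2 := by
  have key : ∀ s, (ρ₀ s + γ * ∑ x : S × A, d x.1 x.2 * P x.1 x.2 s) * Δ s
      = ∑ a, d s a * (c s a + γ * ∑ s', P s a s' * Δ s') := by
    intro s
    rw [hΔ s, Finset.mul_sum]
    apply Finset.sum_congr rfl
    intro a _
    rw [hd s a]
    ring
  have hsumkey := Finset.sum_congr rfl (fun s (_ : s ∈ Finset.univ) => key s)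
  have hL : ∑ s, (ρ₀ s + γ * ∑ x : S × A, d x.1 x.2 * P x.1 x.2 s) * Δ s
      = (∑ s, ρ₀ s * Δ s)
        + γ * ∑ x : S × A, d x.1 x.2 * ∑ s', P x.1 x.2 s' * Δ s' := by
    have expand : ∀ s, (ρ₀ s + γ * ∑ x : S × A, d x.1 x.2 * P x.1 x.2 s) * Δ s
        = ρ₀ s * Δ s + γ * ∑ x : S × A, d x.1 x.2 * (P x.1 x.2 s * Δ s) := by
      intro s
      rw [add_mul, mul_assoc, Finset.sum_mul]
      congr 2
      apply Finset.sum_congr rfl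
      intro x _
      ring
    simp only [expand]
    rw [Finset.sum_add_distrib]
    congr 1
    rw [← Finset.mul_sum]
    congr 1
    rw [Finset.sum_comm]
    apply Finset.sum_congr rfl
    intro x _
    rw [Finset.mul_sum]
  have hR : ∑ s, ∑ a, d s a * (c s a + γ * ∑ s', P s a s' * Δ s')
      = (∑ x : S × A, d x.1 x.2 * c x.1 x.2)
        + γ * ∑ x : S × A, d x.1 x.2 * ∑ s', P x.1 x.2 s' * Δ s' := by
    have h1 : ∑ x : S × A, d x.1 x.2 * c x.1 x.2 = ∑ s, ∑ a, d s a * c s a := by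
      rw [Fintype.sum_prod_type]
    have h2 : ∑ x : S × A, d x.1 x.2 * ∑ s', P x.1 x.2 s' * Δ s'
        = ∑ s, ∑ a, d s a * ∑ s', P s a s' * Δ s' := by
      rw [Fintype.sum_prod_type]
    rw [h1, h2]
    simp only [Finset.mul_sum]
    rw [← Finset.sum_add_distrib]
    apply Finset.sum_congr rfl
    intro s _
    rw [← Finset.sum_add_distrib]
    apply Finset.sum_congr rfl
    intro a _
    rw [mul_add, Finset.mul_sum]
    congr 1
    apply Finset.sum_congr rfl
    intro x _
    ring
  rw [hL, hR] at hsumkey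
  linarith
end Aux2

/-- **Simulation lemma.** For two kernels on the same finite MDP, the value gap of any
stationary policy is bounded by the occupancy-weighted one-step total variation error. -/
theorem simulation_lemma
    {S A : Type*} [Fintype S] [Fintype A] [Nonempty S] [Nonempty A]
    (P Phat : S → A → S → ℝ) (hP : IsKernel P) (hPhat : IsKernel Phat)
    (r : S → A → ℝ) (Rmax : ℝ) (hr : ∀ s a, 0 ≤ r s a ∧ r s a ≤ Rmax)
    (γ : ℝ) (hγ0 : 0 < γ) (hγ1 : γ < 1)
    (ρ₀ : S → ℝ) (hρ : IsPMF ρ₀)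
    (pol : S → A → ℝ) (hpol : IsPolicy pol)
    (V Vhat : S → ℝ) (hV : IsValue P pol r γ V) (hVhat : IsValue Phat pol r γ Vhat)
    (dpol : S → A → ℝ) (hd : IsOcc P pol ρ₀ γ dpol) :
    |(∑ s, ρ₀ s * V s) - ∑ s, ρ₀ s * Vhat s| ≤
      γ * Rmax / (1 - γ) *
        ∑ x : S × A, dpol x.1 x.2 * ((1 / 2) * l1Dist (P x.1 x.2) (Phat x.1 x.2)) := by
  have h1γ : (0:ℝ) < 1 - γ := by linarith
  have hRmax : 0 ≤ Rmax :=
    le_trans (hr (Classical.arbitrary S) (Classical.arbitrary A)).1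
      (hr (Classical.arbitrary S) (Classical.arbitrary A)).2
  set M : ℝ := Rmax / (1 - γ) with hM
  have hM0 : 0 ≤ M := div_nonneg hRmax h1γ.le
  have hVb := value_bounds Phat hPhat pol hpol r Rmax hr γ hγ0 hγ1 Vhat hVhat
  have hdnn := occ_nonneg P hP pol hpol ρ₀ hρ γ hγ0 hγ1 dpol hd
  have hΔ : ∀ s, V s - Vhat s = ∑ a, pol s a *
      ((γ * ((∑ s', P s a s' * Vhat s') - ∑ s', Phat s a s' * Vhat s'))
        + γ * ∑ s', P s a s' * (V s' - Vhat s')) := by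
    intro s
    rw [hV s, hVhat s, ← Finset.sum_sub_distrib]
    apply Finset.sum_congr rfl
    intro a _
    have hsub : ∑ s', P s a s' * (V s' - Vhat s')
        = (∑ s', P s a s' * V s') - ∑ s', P s a s' * Vhat s' := by
      rw [← Finset.sum_sub_distrib]
      apply Finset.sum_congr rfl
      intro x _
      ring
    rw [hsub]
    ring
  have hkey : ∑ s, ρ₀ s * (V s - Vhat s)
      = ∑ x : S × A, dpol x.1 x.2 *
          (γ * ((∑ s', P x.1 x.2 s' * Vhat s') - ∑ s', Phat x.1 x.2 s' * Vhat s')) :=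
    occ_measure P hP pol hpol ρ₀ γ dpol hd
      (fun s a => γ * ((∑ s', P s a s' * Vhat s') - ∑ s', Phat s a s' * Vhat s'))
      (fun s => V s - Vhat s) hΔ
  have hlhs : (∑ s, ρ₀ s * V s) - ∑ s, ρ₀ s * Vhat s = ∑ s, ρ₀ s * (V s - Vhat s) := by
    rw [← Finset.sum_sub_distrib]
    apply Finset.sum_congr rfl
    intro s _
    ring
  rw [hlhs, hkey]
  have hbound : ∀ s a, |γ * ((∑ s', P s a s' * Vhat s') - ∑ s', Phat s a s' * Vhat s')|
      ≤ γ * Rmax / (1 - γ) * ((1 / 2) * l1Dist (P s a) (Phat s a)) := by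
    intro s a
    have hrw : (∑ s', P s a s' * Vhat s') - ∑ s', Phat s a s' * Vhat s'
        = ∑ s', (P s a s' - Phat s a s') * (Vhat s' - M / 2) := by
      have e1 : ∀ s' : S, (P s a s' - Phat s a s') * (Vhat s' - M / 2)
          = (P s a s' * Vhat s' - Phat s a s' * Vhat s')
            - (M / 2) * P s a s' + (M / 2) * Phat s a s' := by
        intro s'; ring
      simp only [e1]
      rw [Finset.sum_add_distrib, Finset.sum_sub_distrib, Finset.sum_sub_distrib,
        ← Finset.mul_sum, ← Finset.mul_sum, (hP s a).2, (hPhat s a).2]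
      ring
    rw [abs_mul, abs_of_nonneg hγ0.le, hrw]
    have habs : |∑ s', (P s a s' - Phat s a s') * (Vhat s' - M / 2)|
        ≤ ∑ s', |P s a s' - Phat s a s'| * (M / 2) := by
      refine le_trans (Finset.abs_sum_le_sum_abs _ _) ?_
      apply Finset.sum_le_sum
      intro s' _
      rw [abs_mul]
      apply mul_le_mul_of_nonneg_left _ (abs_nonneg _)
      apply abs_le.mpr
      constructor
      · have := (hVb s').1; linarith [hM0]
      · have := (hVb s').2; linarith
    have hsum : ∑ s', |P s a s' - Phat s a s'| * (M / 2)
        = (M / 2) * l1Dist (P s a) (Phat s a) := by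
      simp only [l1Dist]
      rw [← Finset.sum_mul, mul_comm]
    calc γ * |∑ s', (P s a s' - Phat s a s') * (Vhat s' - M / 2)|
        ≤ γ * ((M / 2) * l1Dist (P s a) (Phat s a)) := by
          apply mul_le_mul_of_nonneg_left _ hγ0.le
          rw [← hsum]; exact habs
    _ = γ * Rmax / (1 - γ) * ((1 / 2) * l1Dist (P s a) (Phat s a)) := by
          rw [hM]; ring
  calc |∑ x : S × A, dpol x.1 x.2 *
        (γ * ((∑ s', P x.1 x.2 s' * Vhat s') - ∑ s', Phat x.1 x.2 s' * Vhat s'))|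
      ≤ ∑ x : S × A, |dpol x.1 x.2 *
        (γ * ((∑ s', P x.1 x.2 s' * Vhat s') - ∑ s', Phat x.1 x.2 s' * Vhat s'))| :=
        Finset.abs_sum_le_sum_abs _ _
  _ ≤ ∑ x : S × A, dpol x.1 x.2 *
        (γ * Rmax / (1 - γ) * ((1 / 2) * l1Dist (P x.1 x.2) (Phat x.1 x.2))) := by
        apply Finset.sum_le_sum
        intro x _
        rw [abs_mul, abs_of_nonneg (hdnn x.1 x.2)]
        exact mul_le_mul_of_nonneg_left (hbound x.1 x.2) (hdnn x.1 x.2)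
  _ = γ * Rmax / (1 - γ) *
        ∑ x : S × A, dpol x.1 x.2 * ((1 / 2) * l1Dist (P x.1 x.2) (Phat x.1 x.2)) := by
        rw [Finset.mul_sum]
        apply Finset.sum_congr rfl
        intro x _
        ring
end

section
/- Value gap via occupancy-weighted KL: Let P and P̂ be two transition kernels on the same finite MDP (same reward r with 0 ≤ r ≤ R_max, discount γ ∈ (0,1), initial distribution ρ₀), and suppose for every (s,a), P(s'|s,a) > 0 implies P̂(s'|s,a) > 0. Then for every stationary policy π, |V_π(P) − V_π(P̂)| ≤ (γ·R_max/(1−γ)²) · sqrt( (1/2) · Σ_{(s,a)} d̄_π(s,a)·KL(P(·|s,a) ‖ P̂(·|s,a)) ), where d̄_π is the normalized discounted occupancy of π under P. -/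
open Finset Real

/-!
By the simulation lemma the value gap is `γ ∑ d(s,a) ((P - P̂) V̂)(s,a)`. As `0 ≤ V̂ ≤ Rmax/(1-γ)`,
each one-step error is at most `Rmax/(1-γ)` times the total variation distance between `P(·|s,a)`
and `P̂(·|s,a)`, hence by Pinsker's inequality at most `Rmax/(1-γ) · √(KL/2)`. Jensen's inequality
for the concave square root against the normalized occupancy `(1-γ) d` finishes the proof.

Pinsker's inequality follows from the pointwise bound `3 (t-1)² ≤ 2 (t+2) (t log t - t + 1)` and
Cauchy–Schwarz.
-/

open InformationTheory

lemma nonneg_of_hasDerivAt_of_sub_one_mul_nonneg {f f' : ℝ → ℝ}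
    (hf : ∀ x, 0 < x → HasDerivAt f (f' x) x) (hf₁ : f 1 = 0)
    (hf' : ∀ x, 0 < x → 0 ≤ (x - 1) * f' x) {x : ℝ} (hx : 0 < x) : 0 ≤ f x := by
  have hcont : ∀ D ⊆ Set.Ioi (0 : ℝ), ContinuousOn f D := fun D hD y hy =>
    (hf y (hD hy)).continuousAt.continuousWithinAt
  rcases le_total x 1 with hx₁ | hx₁
  · have hanti : AntitoneOn f (Set.Ioc 0 1) := by
      refine antitoneOn_of_hasDerivWithinAt_nonpos (f' := f') (convex_Ioc 0 1)
        (hcont _ Set.Ioc_subset_Ioi_self) (fun y hy => ?_) (fun y hy => ?_) <;>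
        rw [interior_Ioc] at hy
      · exact (hf y hy.1).hasDerivWithinAt
      · exact nonpos_of_mul_nonneg_right (hf' y hy.1) (by linarith [hy.2])
    simpa [hf₁] using hanti ⟨hx, hx₁⟩ ⟨one_pos, le_rfl⟩ hx₁
  · have hmono : MonotoneOn f (Set.Ici 1) := by
      refine monotoneOn_of_hasDerivWithinAt_nonneg (f' := f') (convex_Ici 1)
        (hcont _ fun y (hy : 1 ≤ y) => one_pos.trans_le hy) (fun y hy => ?_) (fun y hy => ?_) <;>
        rw [interior_Ici] at hy
      · exact (hf y (one_pos.trans hy)).hasDerivWithinAt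
      · exact nonneg_of_mul_nonneg_right (hf' y (one_pos.trans hy)) (by linarith [hy.out])
    simpa [hf₁] using hmono Set.self_mem_Ici hx₁ hx₁

lemma sub_one_mul_add_one_mul_log_sub_nonneg {t : ℝ} (ht : 0 < t) :
    0 ≤ (t - 1) * ((t + 1) * log t - 2 * (t - 1)) := by
  set G : ℝ → ℝ := fun t => (t + 1) * log t - 2 * (t - 1)
  have hG : ∀ t, 0 < t → HasDerivAt G (log t + 1 / t - 1) t := fun t ht => by
    refine ((((hasDerivAt_id t).add_const 1).mul (hasDerivAt_log ht.ne')).sub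
      (((hasDerivAt_id t).sub_const 1).const_mul 2)).congr_deriv ?_
    simp only [id]
    field_simp
    ring
  have hmono : MonotoneOn G (Set.Ioi 0) := by
    refine monotoneOn_of_hasDerivWithinAt_nonneg (f' := fun t => log t + 1 / t - 1)
      (convex_Ioi 0) (fun y hy => (hG y hy).continuousAt.continuousWithinAt)
      (fun y hy => ?_) (fun y hy => ?_) <;> rw [interior_Ioi] at hy
    · exact (hG y hy).hasDerivWithinAt
    · linarith [one_sub_inv_le_log_of_pos hy, one_div y]
  have hG₁ : G 1 = 0 := by simp [G]
  rcases le_total t 1 with ht₁ | ht₁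
  · exact mul_nonneg_of_nonpos_of_nonpos (by linarith)
      (hG₁ ▸ hmono ht (Set.mem_Ioi.2 one_pos) ht₁)
  · exact mul_nonneg (by linarith) (hG₁ ▸ hmono (Set.mem_Ioi.2 one_pos) ht ht₁)

lemma three_mul_sq_sub_one_le_klFun {t : ℝ} (ht : 0 ≤ t) :
    3 * (t - 1) ^ 2 ≤ 2 * (t + 2) * klFun t := by
  rcases ht.eq_or_lt with rfl | ht
  · norm_num [klFun_zero]
  have hF : ∀ t, 0 < t → HasDerivAt (fun t => 2 * (t + 2) * klFun t - 3 * (t - 1) ^ 2)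
      (4 * ((t + 1) * log t - 2 * (t - 1))) t := fun t ht => by
    refine ((((hasDerivAt_id t).add_const 2).const_mul 2).mul (hasDerivAt_klFun ht.ne')).sub
      ((((hasDerivAt_id t).sub_const 1).pow 2).const_mul 3) |>.congr_deriv ?_
    simp only [klFun_apply, id]
    push_cast
    ring
  have := nonneg_of_hasDerivAt_of_sub_one_mul_nonneg hF (by simp [klFun_one])
    (fun x hx => by nlinarith [sub_one_mul_add_one_mul_log_sub_nonneg hx]) ht
  linarith

section ScalarKL

variable {p q : ℝ}

lemma mul_klFun_div (hq : q ≠ 0) : q * klFun (p / q) = p * log (p / q) - p + q := by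
  rw [klFun_apply]
  field_simp
  ring

lemma mul_log_div_sub_add_nonneg (hp : 0 ≤ p) (hq : 0 ≤ q) (habs : 0 < p → 0 < q) :
    0 ≤ p * log (p / q) - p + q := by
  rcases hq.eq_or_lt with rfl | hq
  · simp [le_antisymm (not_lt.1 fun h => (habs h).false) hp]
  · rw [← mul_klFun_div hq.ne']
    exact mul_nonneg hq.le (klFun_nonneg (div_nonneg hp hq.le))

lemma three_mul_sq_sub_le_mul_log_div_sub_add (hp : 0 ≤ p) (hq : 0 ≤ q)
    (habs : 0 < p → 0 < q) : 3 * (p - q) ^ 2 ≤ 2 * (p + 2 * q) * (p * log (p / q) - p + q) := by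
  rcases hq.eq_or_lt with rfl | hq
  · simp [le_antisymm (not_lt.1 fun h => (habs h).false) hp]
  · rw [← mul_klFun_div hq.ne']
    calc 3 * (p - q) ^ 2 = q ^ 2 * (3 * (p / q - 1) ^ 2) := by field_simp
      _ ≤ q ^ 2 * (2 * (p / q + 2) * klFun (p / q)) :=
        mul_le_mul_of_nonneg_left (three_mul_sq_sub_one_le_klFun (div_nonneg hp hq.le))
          (sq_nonneg q)
      _ = 2 * (p + 2 * q) * (q * klFun (p / q)) := by field_simp

end ScalarKL

section PMF

variable {X : Type*} [Fintype X] {p q f : X → ℝ}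

lemma IsPMF.nonempty (hp : IsPMF p) : Nonempty X := by
  by_contra h
  rw [not_nonempty_iff] at h
  simpa using hp.2

lemma IsPMF.sum_mul_le (hp : IsPMF p) {c : ℝ} (hf : ∀ x, f x ≤ c) : ∑ x, p x * f x ≤ c :=
  calc ∑ x, p x * f x ≤ ∑ x, p x * c :=
        sum_le_sum fun x _ => mul_le_mul_of_nonneg_left (hf x) (hp.1 x)
    _ = c := by rw [← sum_mul, hp.2, one_mul]

lemma IsPMF.abs_sum_mul_le_mul_sqrt {e K : X → ℝ} (hp : IsPMF p) (hK : ∀ x, 0 ≤ K x) {C : ℝ}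
    (hC : 0 ≤ C) (he : ∀ x, |e x| ≤ C * √(K x)) :
    |∑ x, p x * e x| ≤ C * √(∑ x, p x * K x) :=
  calc |∑ x, p x * e x| ≤ ∑ x, p x * (C * √(K x)) :=
        (abs_sum_le_sum_abs _ _).trans <| sum_le_sum fun x _ => by
          rw [abs_mul, abs_of_nonneg (hp.1 x)]
          exact mul_le_mul_of_nonneg_left (he x) (hp.1 x)
    _ = C * ∑ x, p x • √(K x) := by
        rw [mul_sum]
        exact sum_congr rfl fun x _ => by rw [smul_eq_mul]; ring
    _ ≤ C * √(∑ x, p x • K x) := by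
        gcongr
        exact strictConcaveOn_sqrt.concaveOn.le_map_sum (fun x _ => hp.1 x) hp.2 fun x _ => hK x
    _ = C * √(∑ x, p x * K x) := rfl

lemma klF_eq_sum_mul_log_div_sub_add (hpq : ∑ x, p x = ∑ x, q x) :
    klF p q = ∑ x, (p x * log (p x / q x) - p x + q x) := by
  rw [sum_add_distrib, sum_sub_distrib, hpq, sub_add_cancel, klF]

lemma klF_nonneg (hp : IsPMF p) (hq : IsPMF q) (habs : ∀ x, 0 < p x → 0 < q x) :
    0 ≤ klF p q := by
  rw [klF_eq_sum_mul_log_div_sub_add (hp.2.trans hq.2.symm)]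
  exact sum_nonneg fun x _ => mul_log_div_sub_add_nonneg (hp.1 x) (hq.1 x) (habs x)

lemma sq_l1Dist_le_two_mul_klF (hp : IsPMF p) (hq : IsPMF q) (habs : ∀ x, 0 < p x → 0 < q x) :
    l1Dist p q ^ 2 ≤ 2 * klF p q := by
  -- Cauchy–Schwarz against the weights `p + 2q`, whose total mass is `3`.
  have hcs := sum_sq_le_sum_mul_sum_of_sq_le_mul univ (r := fun x => |p x - q x|)
    (f := fun x => p x + 2 * q x) (g := fun x => 2 / 3 * (p x * log (p x / q x) - p x + q x))
    (fun x _ => by linarith [hp.1 x, hq.1 x])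
    (fun x _ => mul_nonneg (by norm_num) (mul_log_div_sub_add_nonneg (hp.1 x) (hq.1 x) (habs x)))
    (fun x _ => by
      rw [sq_abs]
      nlinarith [three_mul_sq_sub_le_mul_log_div_sub_add (hp.1 x) (hq.1 x) (habs x)])
  rw [sum_add_distrib, ← mul_sum, ← mul_sum,
    ← klF_eq_sum_mul_log_div_sub_add (hp.2.trans hq.2.symm), hp.2, hq.2] at hcs
  rw [l1Dist]
  linarith

theorem tvDist_le_sqrt_klF (hp : IsPMF p) (hq : IsPMF q) (habs : ∀ x, 0 < p x → 0 < q x) :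
    tvDist p q ≤ √((1 / 2) * klF p q) := by
  refine le_sqrt_of_sq_le ?_
  have h := sq_l1Dist_le_two_mul_klF hp hq habs
  rw [l1Dist] at h
  rw [tvDist]
  nlinarith

lemma abs_sum_mul_sub_sum_mul_le_mul_tvDist (hpq : ∑ x, p x = ∑ x, q x) {lo hi : ℝ}
    (hf : ∀ x, lo ≤ f x ∧ f x ≤ hi) :
    |∑ x, p x * f x - ∑ x, q x * f x| ≤ (hi - lo) * tvDist p q := by
  -- Since `p` and `q` have the same mass, `f` may be centred at the midpoint of `[lo, hi]`.
  set c := (lo + hi) / 2 with hc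
  have hcentre : ∑ x, p x * f x - ∑ x, q x * f x = ∑ x, (p x - q x) * (f x - c) := by
    simp only [sub_mul, mul_sub, sum_sub_distrib, ← sum_mul, hpq]
    ring
  rw [hcentre, tvDist, mul_sum, mul_sum]
  refine (abs_sum_le_sum_abs _ _).trans (sum_le_sum fun x _ => ?_)
  have hfc : |f x - c| ≤ (hi - lo) / 2 :=
    abs_sub_le_iff.2 ⟨by linarith [hf x, hc], by linarith [hf x, hc]⟩
  rw [abs_mul]
  nlinarith [abs_nonneg (p x - q x)]

lemma abs_sum_mul_sub_sum_mul_le_mul_sqrt_klF (hp : IsPMF p) (hq : IsPMF q)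
    (habs : ∀ x, 0 < p x → 0 < q x) {B : ℝ} (hf : ∀ x, 0 ≤ f x ∧ f x ≤ B) :
    |∑ x, p x * f x - ∑ x, q x * f x| ≤ B * √((1 / 2) * klF p q) := by
  obtain ⟨x⟩ := hp.nonempty
  have h := abs_sum_mul_sub_sum_mul_le_mul_tvDist (hp.2.trans hq.2.symm) hf
  rw [sub_zero] at h
  exact h.trans <|
    mul_le_mul_of_nonneg_left (tvDist_le_sqrt_klF hp hq habs) ((hf x).1.trans (hf x).2)

end PMF

section Value

variable {S A : Type*} [Fintype S] [Fintype A] {P : S → A → S → ℝ} {pol : S → A → ℝ}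
  {r : S → A → ℝ} {γ : ℝ} {V : S → ℝ}

lemma IsValue.neg (hV : IsValue P pol r γ V) : IsValue P pol (-r) γ (-V) := fun s => by
  simp only [hV s, Pi.neg_apply, mul_neg, sum_neg_distrib, ← neg_add]

lemma IsValue.le_div_one_sub (hV : IsValue P pol r γ V) (hP : IsKernel P)
    (hpol : IsPolicy pol) (hγ0 : 0 ≤ γ) (hγ1 : γ < 1) {R : ℝ} (hr : ∀ s a, r s a ≤ R) (s : S) :
    V s ≤ R / (1 - γ) := by
  have : Nonempty S := ⟨s⟩
  obtain ⟨s₀, hs₀⟩ := Finite.exists_max V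
  have hmax : V s₀ ≤ R + γ * V s₀ :=
    (hV s₀).trans_le <| (hpol s₀).sum_mul_le fun a => add_le_add (hr s₀ a) <|
      mul_le_mul_of_nonneg_left ((hP s₀ a).sum_mul_le hs₀) hγ0
  rw [le_div_iff₀ (by linarith)]
  nlinarith [hs₀ s]

lemma IsValue.nonneg (hV : IsValue P pol r γ V) (hP : IsKernel P) (hpol : IsPolicy pol)
    (hγ0 : 0 ≤ γ) (hγ1 : γ < 1) (hr : ∀ s a, 0 ≤ r s a) (s : S) : 0 ≤ V s := by
  simpa using hV.neg.le_div_one_sub hP hpol hγ0 hγ1 (R := 0) (fun s a => neg_nonpos.2 (hr s a)) s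

end Value

section Visitation

variable {ι : Type*} [Fintype ι]

/-- `d = ∑ₜ γᵗ ρ Mᵗ`, the discounted visitation measure of the chain `M` started from `ρ`. -/
def IsDiscountedVisitation (M : ι → ι → ℝ) (ρ : ι → ℝ) (γ : ℝ) (d : ι → ℝ) : Prop :=
  ∀ j, d j = ρ j + γ * ∑ i, d i * M i j

variable {M : ι → ι → ℝ} {ρ : ι → ℝ} {γ : ℝ} {d : ι → ℝ}

lemma IsDiscountedVisitation.sum_mul_eq (hd : IsDiscountedVisitation M ρ γ d) (g : ι → ℝ) :
    ∑ j, d j * g j = ∑ j, ρ j * g j + γ * ∑ i, d i * ∑ j, M i j * g j := by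
  calc ∑ j, d j * g j = ∑ j, (ρ j + γ * ∑ i, d i * M i j) * g j :=
        sum_congr rfl fun j _ => by rw [← hd j]
    _ = _ := by
      simp only [add_mul, sum_add_distrib, mul_sum, sum_mul]
      rw [sum_comm]
      simp only [mul_assoc]

lemma IsDiscountedVisitation.one_sub_mul_sum (hd : IsDiscountedVisitation M ρ γ d)
    (hM : ∀ i, ∑ j, M i j = 1) : (1 - γ) * ∑ j, d j = ∑ j, ρ j := by
  have := hd.sum_mul_eq 1
  simp only [Pi.one_apply, mul_one, hM] at this
  linarith

/-- The negative part `n` of `d` satisfies `n ≤ γ n M`; summing gives `∑ n ≤ γ ∑ n`, so `n = 0`. -/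
lemma IsDiscountedVisitation.nonneg (hd : IsDiscountedVisitation M ρ γ d)
    (hM : ∀ i, IsPMF (M i)) (hρ : ∀ j, 0 ≤ ρ j) (hγ0 : 0 ≤ γ) (hγ1 : γ < 1) (j : ι) :
    0 ≤ d j := by
  set n : ι → ℝ := fun i => max (-d i) 0
  have hn0 : ∀ i, 0 ≤ n i := fun i => le_max_right _ _
  have hn : ∀ j, n j ≤ γ * ∑ i, n i * M i j := fun j => by
    refine max_le ?_ (mul_nonneg hγ0 (sum_nonneg fun i _ => mul_nonneg (hn0 i) ((hM i).1 j)))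
    have : -∑ i, d i * M i j ≤ ∑ i, n i * M i j := by
      rw [← sum_neg_distrib]
      exact sum_le_sum fun i _ => by nlinarith [le_max_left (-d i) 0, (hM i).1 j]
    rw [hd j]
    nlinarith [hρ j]
  have hsum : ∑ j, n j ≤ γ * ∑ j, n j :=
    calc ∑ j, n j ≤ ∑ j, γ * ∑ i, n i * M i j := sum_le_sum fun j _ => hn j
      _ = γ * ∑ j, n j := by
        rw [← mul_sum, sum_comm]
        simp only [← mul_sum, (hM _).2, mul_one]
  have hzero : n j = 0 := by
    have : ∑ j, n j = 0 := le_antisymm (by nlinarith) (sum_nonneg fun i _ => hn0 i)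
    exact (sum_eq_zero_iff_of_nonneg fun i _ => hn0 i).1 this j (mem_univ j)
  linarith [le_max_left (-d j) 0]

end Visitation

section Occupancy

variable {S A : Type*} [Fintype S] [Fintype A] {P : S → A → S → ℝ} {pol : S → A → ℝ}
  {ρ₀ : S → ℝ} {γ : ℝ} {d : S → A → ℝ}

def stateActionKernel (P : S → A → S → ℝ) (pol : S → A → ℝ) (x y : S × A) : ℝ :=
  P x.1 x.2 y.1 * pol y.1 y.2

lemma sum_stateActionKernel_mul (x : S × A) (g : S → A → ℝ) :
    ∑ y, stateActionKernel P pol x y * g y.1 y.2 =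
      ∑ s', P x.1 x.2 s' * ∑ a, pol s' a * g s' a := by
  simp only [stateActionKernel, Fintype.sum_prod_type, mul_sum, mul_assoc]

lemma isPMF_stateActionKernel (hP : IsKernel P) (hpol : IsPolicy pol) (x : S × A) :
    IsPMF (stateActionKernel P pol x) := by
  refine ⟨fun y => mul_nonneg ((hP _ _).1 _) ((hpol _).1 _), ?_⟩
  simpa [(hpol _).2, (hP _ _).2] using sum_stateActionKernel_mul (P := P) (pol := pol) x 1

lemma IsOcc.isDiscountedVisitation (hd : IsOcc P pol ρ₀ γ d) :
    IsDiscountedVisitation (stateActionKernel P pol) (fun y => pol y.1 y.2 * ρ₀ y.1) γ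
      (fun x => d x.1 x.2) := fun y => by
  change d y.1 y.2 = _
  rw [hd y.1 y.2, mul_add, mul_left_comm, mul_sum]
  simp only [stateActionKernel]
  congr 2
  exact sum_congr rfl fun x _ => by ring

lemma IsOcc.isPMF_one_sub_mul (hd : IsOcc P pol ρ₀ γ d) (hP : IsKernel P) (hpol : IsPolicy pol)
    (hρ : IsPMF ρ₀) (hγ0 : 0 ≤ γ) (hγ1 : γ < 1) :
    IsPMF fun x : S × A => (1 - γ) * d x.1 x.2 := by
  have hvis := hd.isDiscountedVisitation
  refine ⟨fun x => mul_nonneg (by linarith) (hvis.nonneg (isPMF_stateActionKernel hP hpol)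
    (fun _ => mul_nonneg ((hpol _).1 _) (hρ.1 _)) hγ0 hγ1 x), ?_⟩
  rw [← mul_sum, hvis.one_sub_mul_sum fun x => (isPMF_stateActionKernel hP hpol x).2,
    Fintype.sum_prod_type]
  simp [← sum_mul, (hpol _).2, hρ.2]

lemma IsOcc.sum_mul_eq (hd : IsOcc P pol ρ₀ γ d) (g : S → A → ℝ) :
    ∑ x : S × A, d x.1 x.2 * g x.1 x.2 = ∑ s, ρ₀ s * ∑ a, pol s a * g s a +
      γ * ∑ x : S × A, d x.1 x.2 * ∑ s', P x.1 x.2 s' * ∑ a, pol s' a * g s' a := by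
  rw [hd.isDiscountedVisitation.sum_mul_eq fun y => g y.1 y.2, Fintype.sum_prod_type]
  simp only [sum_stateActionKernel_mul, mul_sum, mul_assoc, mul_left_comm (ρ₀ _)]

lemma IsOcc.simulation (hd : IsOcc P pol ρ₀ γ d) {Phat : S → A → S → ℝ} {r : S → A → ℝ}
    {V Vhat : S → ℝ} (hV : IsValue P pol r γ V) (hVhat : IsValue Phat pol r γ Vhat) :
    ∑ s, ρ₀ s * V s - ∑ s, ρ₀ s * Vhat s =
      γ * ∑ x : S × A, d x.1 x.2 * critDelta P Phat (fun _ _ => Vhat) x.1 x.2 := by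
  set g : S → A → ℝ := fun s a => γ * (∑ s', P s a s' * V s' - ∑ s', Phat s a s' * Vhat s')
  have hg : ∀ s, ∑ a, pol s a * g s a = V s - Vhat s := fun s => by
    rw [hV s, hVhat s, ← sum_sub_distrib]
    exact sum_congr rfl fun a _ => by ring
  have hdual := hd.sum_mul_eq g
  simp only [hg] at hdual
  calc ∑ s, ρ₀ s * V s - ∑ s, ρ₀ s * Vhat s
      = ∑ x : S × A, d x.1 x.2 * g x.1 x.2 -
          γ * ∑ x : S × A, d x.1 x.2 * ∑ s', P x.1 x.2 s' * (V s' - Vhat s') := by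
        rw [hdual, ← sum_sub_distrib]
        simp only [mul_sub]
        ring
    _ = _ := by
      rw [mul_sum, mul_sum, ← sum_sub_distrib]
      refine sum_congr rfl fun x _ => ?_
      simp only [g, critDelta, mul_sub, sum_sub_distrib]
      ring

end Occupancy

theorem value_gap_via_kl_general
    {S A : Type*} [Fintype S] [Fintype A]
    (P Phat : S → A → S → ℝ) (hP : IsKernel P) (hPhat : IsKernel Phat)
    (r : S → A → ℝ) (Rmax : ℝ) (hr : ∀ s a, 0 ≤ r s a ∧ r s a ≤ Rmax)
    (γ : ℝ) (hγ0 : 0 < γ) (hγ1 : γ < 1)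
    (ρ₀ : S → ℝ) (hρ : IsPMF ρ₀)
    (habs : ∀ s a s', 0 < P s a s' → 0 < Phat s a s')
    (pol : S → A → ℝ) (hpol : IsPolicy pol)
    (V Vhat : S → ℝ) (hV : IsValue P pol r γ V) (hVhat : IsValue Phat pol r γ Vhat)
    (dpol : S → A → ℝ) (hd : IsOcc P pol ρ₀ γ dpol) :
    |(∑ s, ρ₀ s * V s) - ∑ s, ρ₀ s * Vhat s| ≤
      γ * Rmax / (1 - γ) ^ 2 *
        Real.sqrt ((1 / 2) *
          ∑ x : S × A, (1 - γ) * dpol x.1 x.2 * klF (P x.1 x.2) (Phat x.1 x.2)) := by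
  obtain ⟨s₀⟩ := hρ.nonempty
  obtain ⟨a₀⟩ := (hpol s₀).nonempty
  have hγ' : 0 < 1 - γ := by linarith
  have hVhat_mem : ∀ s, 0 ≤ Vhat s ∧ Vhat s ≤ Rmax / (1 - γ) := fun s =>
    ⟨hVhat.nonneg hPhat hpol hγ0.le hγ1 (fun s a => (hr s a).1) s,
      hVhat.le_div_one_sub hPhat hpol hγ0.le hγ1 (fun s a => (hr s a).2) s⟩
  have hgap := (hd.isPMF_one_sub_mul hP hpol hρ hγ0.le hγ1).abs_sum_mul_le_mul_sqrt
    (fun x => mul_nonneg (by norm_num) (klF_nonneg (hP x.1 x.2) (hPhat x.1 x.2) (habs x.1 x.2)))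
    (div_nonneg ((hr s₀ a₀).1.trans (hr s₀ a₀).2) hγ'.le)
    fun x => abs_sum_mul_sub_sum_mul_le_mul_sqrt_klF (hP x.1 x.2) (hPhat x.1 x.2) (habs x.1 x.2)
      hVhat_mem
  calc |(∑ s, ρ₀ s * V s) - ∑ s, ρ₀ s * Vhat s|
      = γ / (1 - γ) *
          |∑ x : S × A, (1 - γ) * dpol x.1 x.2 * critDelta P Phat (fun _ _ => Vhat) x.1 x.2| := by
        simp only [hd.simulation hV hVhat, mul_assoc, ← mul_sum, abs_mul, abs_of_pos hγ0,
          abs_of_pos hγ']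
        field_simp
    _ ≤ γ / (1 - γ) * (Rmax / (1 - γ) *
          √(∑ x : S × A, (1 - γ) * dpol x.1 x.2 * ((1 / 2) * klF (P x.1 x.2) (Phat x.1 x.2)))) := by
        gcongr
        exact hgap
    _ = _ := by
        rw [mul_sum (a := 1 / 2)]
        field_simp

/-- **Value gap via occupancy-weighted KL.** Under absolute continuity, the policy value
gap is bounded via the normalized-occupancy-weighted KL divergence. -/
theorem value_gap_via_kl
    {S A : Type*} [Fintype S] [Fintype A] [Nonempty S] [Nonempty A]
    (P Phat : S → A → S → ℝ) (hP : IsKernel P) (hPhat : IsKernel Phat)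
    (r : S → A → ℝ) (Rmax : ℝ) (hr : ∀ s a, 0 ≤ r s a ∧ r s a ≤ Rmax)
    (γ : ℝ) (hγ0 : 0 < γ) (hγ1 : γ < 1)
    (ρ₀ : S → ℝ) (hρ : IsPMF ρ₀)
    (habs : ∀ s a s', 0 < P s a s' → 0 < Phat s a s')
    (pol : S → A → ℝ) (hpol : IsPolicy pol)
    (V Vhat : S → ℝ) (hV : IsValue P pol r γ V) (hVhat : IsValue Phat pol r γ Vhat)
    (dpol : S → A → ℝ) (hd : IsOcc P pol ρ₀ γ dpol) :
    |(∑ s, ρ₀ s * V s) - ∑ s, ρ₀ s * Vhat s| ≤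
      γ * Rmax / (1 - γ) ^ 2 *
        Real.sqrt ((1 / 2) *
          ∑ x : S × A, (1 - γ) * dpol x.1 x.2 * klF (P x.1 x.2) (Phat x.1 x.2)) :=
  value_gap_via_kl_general P Phat hP hPhat r Rmax hr γ hγ0 hγ1 ρ₀ hρ habs pol hpol V Vhat hV hVhat
    dpol hd
end
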